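/- arXiv:2403.17291 — 6 statements merged into one kernel-verified Lean document; each statement's English description precedes it below -/
import Mathlib

section
/- Fix an integer t \ge 1. As q \to \infty over prime powers, the quantity \prod_{j=1}^t \prod_{i \ge 1} (1 - 1/q^{ij})^{N(q;j)} converges to e^{-(1 + 1/2 + \cdots + 1/t)}. -/
/-!
Write `q = |F|` and `N_d = N(q;d)`. The `N_d` polynomials counted are distinct monic irreducible
divisors of `X ^ q ^ d - X`, so `d N_d ≤ q ^ d`; conversely every nonzero element of the degree-`j`
extension of `F` is a root of one of them for some `d ≤ j`, so
`q ^ j ≤ 1 + ∑_{d ≤ j} d N_d ≤ j N_j + ∑_{d<j} q ^ d`.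
Hence `j N_j q ^ (-j) = 1 + O(1/q)`. The `j`-th factor of the product is `exp (N_j L(q ^ (-j)))`
with `L(r) = ∑_{i ≥ 1} log (1 - r ^ i) = -r + O(r ^ 2)`, so its logarithm is `-1/j + O(1/q)`.
-/

/-- `N(q;j)`: the number of monic irreducible polynomials of degree `j` over the
finite field `F` with nonzero constant term. -/
noncomputable def numIrred (F : Type) [Field F] [Fintype F] (j : ℕ) : ℕ :=
  Nat.card {p : Polynomial F // p.Monic ∧ Irreducible p ∧ p.natDegree = j ∧ p.coeff 0 ≠ 0}

open Polynomial Finset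

def monicIrreducibleNonzeroConst (F : Type*) [Field F] (d : ℕ) : Set F[X] :=
  {p | p.Monic ∧ Irreducible p ∧ p.natDegree = d ∧ p.coeff 0 ≠ 0}

theorem numIrred_eq_ncard (F : Type) [Field F] [Fintype F] (d : ℕ) :
    numIrred F d = (monicIrreducibleNonzeroConst F d).ncard :=
  Nat.card_coe_set_eq _

section Counting

variable {F : Type*} [Field F] [Finite F]

theorem finite_monicIrreducibleNonzeroConst (d : ℕ) :
    (monicIrreducibleNonzeroConst F d).Finite := by
  have : Finite (degreeLT F (d + 1)) := Module.finite_of_finite F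
  refine (degreeLT F (d + 1) : Set F[X]).toFinite.subset fun p hp => ?_
  rw [SetLike.mem_coe, mem_degreeLT]
  exact degree_le_natDegree.trans_lt (by rw [hp.2.2.1]; exact_mod_cast d.lt_succ_self)

theorem mul_ncard_monicIrreducibleNonzeroConst_le (d : ℕ) :
    d * (monicIrreducibleNonzeroConst F d).ncard ≤ Nat.card F ^ d := by
  rcases eq_or_ne d 0 with rfl | hd
  · simp
  have hq : 1 < Nat.card F := Finite.one_lt_card
  set T := (finite_monicIrreducibleNonzeroConst (F := F) d).toFinset
  have hT : ∀ f ∈ T, f.Monic ∧ Irreducible f ∧ f.natDegree = d := fun f hf => by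
    obtain ⟨hm, hi, hdeg, -⟩ := (Set.Finite.mem_toFinset _).1 hf
    exact ⟨hm, hi, hdeg⟩
  have hdvd : ∏ f ∈ T, f ∣ X ^ Nat.card F ^ d - X := by
    refine Finset.prod_dvd_of_coprime (fun f hf g hg hfg => ?_) fun f hf => ?_
    · obtain ⟨hmf, hif, hdf⟩ := hT f hf
      obtain ⟨hmg, -, hdg⟩ := hT g hg
      exact hif.coprime_iff_not_dvd.2 fun h =>
        hfg (eq_of_monic_of_dvd_of_natDegree_le hmf hmg h (by rw [hdf, hdg])).symm
    · obtain ⟨-, hif, hdf⟩ := hT f hf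
      exact hif.natDegree_dvd_iff_dvd_X_pow_card_pow_sub_X.1 (by rw [hdf])
  calc d * (monicIrreducibleNonzeroConst F d).ncard = ∑ f ∈ T, f.natDegree := by
        rw [Set.ncard_eq_toFinset_card _ (finite_monicIrreducibleNonzeroConst d),
          sum_congr rfl fun f hf => (hT f hf).2.2, sum_const, smul_eq_mul, mul_comm]
    _ = (∏ f ∈ T, f).natDegree := (natDegree_prod_of_monic _ _ fun f hf => (hT f hf).1).symm
    _ ≤ (X ^ Nat.card F ^ d - X : F[X]).natDegree :=
        natDegree_le_of_dvd hdvd (FiniteField.X_pow_card_pow_sub_X_ne_zero F hd hq)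
    _ = Nat.card F ^ d := FiniteField.X_pow_card_pow_sub_X_natDegree_eq F hd hq

theorem card_le_one_add_sum_mul_ncard (E : Type*) [Field E] [Algebra F E] [Finite E] :
    Nat.card E ≤
      1 + ∑ d ∈ range (Module.finrank F E + 1), d * (monicIrreducibleNonzeroConst F d).ncard := by
  classical
  have : Fintype E := Fintype.ofFinite E
  have : Module.Finite F E := .of_finite
  set s : Finset E := univ.erase 0
  have hs : Nat.card E = 1 + #s := by
    rw [card_erase_of_mem (mem_univ _), card_univ, Nat.card_eq_fintype_card]
    have := Fintype.card_pos (α := E)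
    omega
  have hfiber : ∀ d, #{α ∈ s | (minpoly F α).natDegree = d} ≤
      d * (monicIrreducibleNonzeroConst F d).ncard := by
    intro d
    rw [Set.ncard_eq_toFinset_card _ (finite_monicIrreducibleNonzeroConst d)]
    refine card_le_mul_card_image_of_maps_to (f := minpoly F) (fun α hα => ?_) d fun f hf => ?_
    · obtain ⟨hα0, hαd⟩ := mem_filter.1 hα
      have hint := IsIntegral.of_finite F α
      exact (Set.Finite.mem_toFinset _).2 ⟨minpoly.monic hint, minpoly.irreducible hint, hαd,
        minpoly.coeff_zero_ne_zero hint (ne_of_mem_erase hα0)⟩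
    · obtain ⟨hm, -, hfd, -⟩ := (Set.Finite.mem_toFinset _).1 hf
      calc #{α ∈ {α ∈ s | (minpoly F α).natDegree = d} | minpoly F α = f}
          ≤ #(f.aroots E).toFinset := card_le_card fun α hα => by
            obtain ⟨-, rfl⟩ := mem_filter.1 hα
            rw [Multiset.mem_toFinset, mem_aroots]
            exact ⟨hm.ne_zero, minpoly.aeval F α⟩
        _ ≤ (f.aroots E).card := Multiset.toFinset_card_le _
        _ ≤ d := hfd ▸ card_roots_map_le_natDegree f
  rw [hs, card_eq_sum_card_fiberwise (f := fun α => (minpoly F α).natDegree)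
    (t := range (Module.finrank F E + 1)) fun α _ => ?_]
  · exact Nat.add_le_add_left (sum_le_sum fun d _ => hfiber d) 1
  · exact mem_range.2 (Nat.lt_succ_of_le (minpoly.natDegree_le α))

theorem card_pow_le_mul_ncard_add_geomSum {j : ℕ} (hj : j ≠ 0) :
    Nat.card F ^ j ≤
      j * (monicIrreducibleNonzeroConst F j).ncard + ∑ d ∈ range j, Nat.card F ^ d := by
  obtain ⟨p, _⟩ := CharP.exists F
  have : Fact p.Prime := ⟨CharP.char_is_prime F p⟩
  have : NeZero j := ⟨hj⟩
  have h := card_le_one_add_sum_mul_ncard (F := F) (FiniteField.Extension F p j)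
  rw [FiniteField.natCard_extension, FiniteField.finrank_extension, sum_range_succ] at h
  obtain ⟨k, rfl⟩ := Nat.exists_eq_add_one_of_ne_zero hj
  have hsmall : 1 + ∑ d ∈ range (k + 1), d * (monicIrreducibleNonzeroConst F d).ncard ≤
      ∑ d ∈ range (k + 1), Nat.card F ^ d := by
    rw [sum_range_succ', sum_range_succ', zero_mul, pow_zero, add_zero, add_comm]
    exact Nat.add_le_add_right (sum_le_sum fun d _ => mul_ncard_monicIrreducibleNonzeroConst_le _) 1
  omega

end Counting

namespace Real

theorem log_one_sub_le_neg {x : ℝ} (hx : x < 1) : log (1 - x) ≤ -x := by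
  linarith [log_le_sub_one_of_pos (sub_pos.2 hx)]

theorem neg_div_one_sub_le_log_one_sub {x : ℝ} (hx : x < 1) : -(x / (1 - x)) ≤ log (1 - x) := by
  have h := one_sub_inv_le_log_of_pos (sub_pos.2 hx)
  have h1 : 1 - x ≠ 0 := (sub_pos.2 hx).ne'
  rwa [show 1 - (1 - x)⁻¹ = -(x / (1 - x)) by field_simp; ring] at h

end Real

open Real

noncomputable def logEuler (r : ℝ) : ℝ := ∑' i : ℕ, log (1 - r ^ (i + 1))

section LogEuler

variable {r : ℝ}

theorem summable_log_one_sub_pow (hr0 : 0 ≤ r) (hr1 : r < 1) :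
    Summable fun i : ℕ => log (1 - r ^ (i + 1)) := by
  have hgeom : Summable fun i : ℕ => -r ^ (i + 1) :=
    ((summable_nat_add_iff 1).2 (summable_geometric_of_lt_one hr0 hr1)).neg
  simpa only [← sub_eq_add_neg] using summable_log_one_add_of_summable hgeom

theorem tprod_one_sub_pow_pow (hr0 : 0 ≤ r) (hr1 : r < 1) (N : ℕ) :
    ∏' i : ℕ, (1 - r ^ (i + 1)) ^ N = exp (N * logEuler r) := by
  have hpos : ∀ i : ℕ, 0 < 1 - r ^ (i + 1) := fun i =>
    sub_pos.2 (pow_lt_one₀ hr0 hr1 i.succ_ne_zero)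
  refine (hasProd_of_hasSum_log (fun i => pow_pos (hpos i) N) ?_).tprod_eq
  unfold logEuler
  simpa only [log_pow] using ((summable_log_one_sub_pow hr0 hr1).hasSum.mul_left (N : ℝ))

theorem logEuler_le (hr0 : 0 ≤ r) (hr1 : r < 1) : logEuler r ≤ -r := by
  have h := le_hasSum (summable_log_one_sub_pow hr0 hr1).hasSum.neg 0 fun i _ =>
    neg_nonneg.2 (log_nonpos (sub_nonneg.2 (pow_le_one₀ hr0 hr1.le)) (by simp; positivity))
  simp only [zero_add, pow_one, neg_le_neg_iff] at h
  exact h.trans (log_one_sub_le_neg hr1)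

theorem neg_div_sq_le_logEuler (hr0 : 0 ≤ r) (hr1 : r < 1) : -(r / (1 - r) ^ 2) ≤ logEuler r := by
  have hr1' : 0 < 1 - r := sub_pos.2 hr1
  have hgeom : HasSum (fun i : ℕ => -(r ^ (i + 1) / (1 - r))) (-(r / (1 - r) ^ 2)) := by
    have h := ((hasSum_geometric_of_lt_one hr0 hr1).mul_right (r / (1 - r))).neg
    rwa [show -((1 - r)⁻¹ * (r / (1 - r))) = -(r / (1 - r) ^ 2) by field_simp,
      show (fun i : ℕ => -(r ^ i * (r / (1 - r)))) = fun i => -(r ^ (i + 1) / (1 - r)) by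
        funext i; ring] at h
  refine hasSum_le (fun i => ?_) hgeom (summable_log_one_sub_pow hr0 hr1).hasSum
  have hpow : r ^ (i + 1) ≤ r := pow_le_of_le_one hr0 hr1.le i.succ_ne_zero
  calc -(r ^ (i + 1) / (1 - r)) ≤ -(r ^ (i + 1) / (1 - r ^ (i + 1))) :=
        neg_le_neg (div_le_div_of_nonneg_left (by positivity) (by linarith) (by linarith))
    _ ≤ log (1 - r ^ (i + 1)) := neg_div_one_sub_le_log_one_sub (by linarith)

theorem abs_logEuler_add_le (hr0 : 0 ≤ r) (hr : r ≤ 1 / 2) : |logEuler r + r| ≤ 8 * r ^ 2 := by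
  have hr1 : r < 1 := by linarith
  have hlow := neg_div_sq_le_logEuler hr0 hr1
  have hup := logEuler_le hr0 hr1
  have hquot : r / (1 - r) ^ 2 ≤ r + 8 * r ^ 2 := by
    rw [div_le_iff₀ (by nlinarith)]
    nlinarith [mul_nonneg hr0 hr0, mul_nonneg (mul_nonneg hr0 hr0) hr0]
  rw [abs_le]
  constructor <;> linarith

end LogEuler

theorem tprod_one_sub_one_div_pow_pow {q : ℝ} (hq : 1 < q) {j : ℕ} (hj : j ≠ 0) (N : ℕ) :
    ∏' i : ℕ, (1 - 1 / q ^ ((i + 1) * j)) ^ N = exp (N * logEuler (q ^ j)⁻¹) := by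
  have hpow : ∀ i : ℕ, 1 / q ^ ((i + 1) * j) = ((q ^ j)⁻¹) ^ (i + 1) := fun i => by
    rw [pow_mul', one_div, inv_pow]
  simp_rw [hpow]
  exact tprod_one_sub_pow_pow (by positivity) (inv_lt_one_of_one_lt₀ (one_lt_pow₀ hq hj)) N

theorem geom_sum_le_two_mul_pow_div {q : ℝ} (hq : 2 ≤ q) (j : ℕ) :
    ∑ d ∈ range j, q ^ d ≤ 2 * q ^ j / q := by
  have hsum : 0 ≤ ∑ d ∈ range j, q ^ d := sum_nonneg fun d _ => pow_nonneg (by linarith) d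
  rw [le_div_iff₀ (by linarith)]
  nlinarith [geom_sum_mul q j]

theorem abs_mul_logEuler_add_inv_le {q N : ℝ} (hq : 2 ≤ q) {j : ℕ} (hj : j ≠ 0)
    (hup : j * N ≤ q ^ j) (hlow : q ^ j ≤ j * N + ∑ d ∈ range j, q ^ d) :
    |N * logEuler (q ^ j)⁻¹ + 1 / j| ≤ 10 / q := by
  set r : ℝ := (q ^ j)⁻¹
  have hq0 : 0 < q := by linarith
  have hr0 : 0 < r := by positivity
  have hrq : r ≤ 1 / q := by rw [one_div]; exact inv_anti₀ hq0 (le_self_pow₀ (by linarith) hj)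
  have hqr : q ^ j * r = 1 := mul_inv_cancel₀ (by positivity)
  have hlow : q ^ j - 2 * q ^ j / q ≤ j * N := by linarith [geom_sum_le_two_mul_pow_div hq j]
  have hjN : 0 ≤ j * N := by
    refine le_trans ?_ hlow
    rw [sub_nonneg, div_le_iff₀ hq0]
    nlinarith [pow_pos hq0 j]
  have herr : |j * N * (logEuler r + r)| ≤ 8 / q := by
    have hL := abs_logEuler_add_le hr0.le (hrq.trans (one_div_le_one_div_of_le two_pos hq))
    calc |j * N * (logEuler r + r)| = j * N * |logEuler r + r| := by
          rw [abs_mul, abs_of_nonneg hjN]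
      _ ≤ q ^ j * (8 * r ^ 2) := mul_le_mul hup hL (abs_nonneg _) (by positivity)
      _ = 8 * r := by linear_combination 8 * r * hqr
      _ ≤ 8 / q := by rw [← mul_one_div]; gcongr
  have hmain : |1 - j * N * r| ≤ 2 / q := by
    have h1 : j * N * r ≤ 1 := hqr ▸ mul_le_mul_of_nonneg_right hup hr0.le
    have h2 : (q ^ j - 2 * q ^ j / q) * r ≤ j * N * r := mul_le_mul_of_nonneg_right hlow hr0.le
    have h3 : (q ^ j - 2 * q ^ j / q) * r = 1 - 2 / q := by
      field_simp
      linear_combination (q - 2) * hqr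
    rw [abs_le]
    constructor <;> linarith [(by positivity : 0 ≤ 2 / q)]
  have hj0 : (0 : ℝ) < j := Nat.cast_pos.2 (Nat.pos_of_ne_zero hj)
  have hsplit : N * logEuler r + 1 / j = (j * N * (logEuler r + r) + (1 - j * N * r)) / j := by
    field_simp
    ring
  rw [hsplit, abs_div, abs_of_pos hj0]
  calc |j * N * (logEuler r + r) + (1 - j * N * r)| / j
      ≤ |j * N * (logEuler r + r) + (1 - j * N * r)| :=
        div_le_self (abs_nonneg _) (by exact_mod_cast Nat.one_le_iff_ne_zero.2 hj)
    _ ≤ 8 / q + 2 / q := (abs_add_le _ _).trans (add_le_add herr hmain)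
    _ = 10 / q := by ring

theorem abs_numIrred_mul_logEuler_add_inv_le (F : Type) [Field F] [Fintype F] {j : ℕ}
    (hj : j ≠ 0) :
    |numIrred F j * logEuler ((Fintype.card F : ℝ) ^ j)⁻¹ + 1 / j| ≤ 10 / Fintype.card F := by
  have hcount := card_pow_le_mul_ncard_add_geomSum (F := F) hj
  have hup := mul_ncard_monicIrreducibleNonzeroConst_le (F := F) j
  rw [← numIrred_eq_ncard, Nat.card_eq_fintype_card] at hcount hup
  exact abs_mul_logEuler_add_inv_le (by exact_mod_cast Fintype.one_lt_card (α := F)) hj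
    (by exact_mod_cast hup) (by exact_mod_cast hcount)

theorem exists_nat_forall_abs_exp_sub_lt (a C : ℝ) {ε : ℝ} (hε : 0 < ε) :
    ∃ Q : ℕ, ∀ (x : ℝ) (q : ℕ), Q ≤ q → |x - a| ≤ C / q → |exp x - exp a| < ε := by
  obtain ⟨δ, hδ, hexp⟩ := Metric.continuousAt_iff.1 continuous_exp.continuousAt ε hε
  obtain ⟨Q, hQ⟩ := Filter.eventually_atTop.1 ((tendsto_const_div_atTop_nhds_zero_nat C).eventually
    (gt_mem_nhds hδ))
  refine ⟨Q, fun x q hq hx => ?_⟩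
  simpa only [Real.dist_eq] using hexp (by rw [Real.dist_eq]; exact hx.trans_lt (hQ q hq))

theorem stmt5_general (t : ℕ) :
    ∀ ε : ℝ, 0 < ε → ∃ Q : ℕ, ∀ (F : Type) [Field F] [Fintype F],
      Q ≤ Fintype.card F →
      |(∏ j ∈ Finset.Icc 1 t, ∏' i : ℕ,
          (1 - 1 / (Fintype.card F : ℝ) ^ ((i + 1) * j)) ^ (numIrred F j)) -
        Real.exp (-(∑ j ∈ Finset.Icc 1 t, (1 : ℝ) / j))| < ε := by
  intro ε hε
  obtain ⟨Q, hQ⟩ := exists_nat_forall_abs_exp_sub_lt (-∑ j ∈ Icc 1 t, (1 : ℝ) / j) (10 * t) hε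
  refine ⟨Q, fun F _ _ hQF => ?_⟩
  have hq : (1 : ℝ) < Fintype.card F := by exact_mod_cast Fintype.one_lt_card (α := F)
  rw [prod_congr rfl fun j hj => tprod_one_sub_one_div_pow_pow hq
    (Nat.one_le_iff_ne_zero.1 (mem_Icc.1 hj).1) _, ← exp_sum]
  refine hQ _ _ hQF ?_
  calc |∑ j ∈ Icc 1 t, numIrred F j * logEuler ((Fintype.card F : ℝ) ^ j)⁻¹ -
        -∑ j ∈ Icc 1 t, (1 : ℝ) / j|
      = |∑ j ∈ Icc 1 t, (numIrred F j * logEuler ((Fintype.card F : ℝ) ^ j)⁻¹ + 1 / j)| := by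
        rw [sum_add_distrib, sub_neg_eq_add]
    _ ≤ ∑ j ∈ Icc 1 t, |numIrred F j * logEuler ((Fintype.card F : ℝ) ^ j)⁻¹ + 1 / j| :=
        abs_sum_le_sum_abs _ _
    _ ≤ ∑ _j ∈ Icc 1 t, 10 / (Fintype.card F : ℝ) := sum_le_sum fun j hj =>
        abs_numIrred_mul_logEuler_add_inv_le F (Nat.one_le_iff_ne_zero.1 (mem_Icc.1 hj).1)
    _ = 10 * t / Fintype.card F := by
        rw [sum_const, Nat.card_Icc, Nat.add_sub_cancel, nsmul_eq_mul]
        ring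

/-- For fixed `t ≥ 1`, as `q → ∞` over prime powers (i.e. over cardinalities of
finite fields), `∏_{j=1}^t ∏_{i ≥ 1} (1 - 1/q^{ij})^{N(q;j)}` converges to
`e^{-(1 + 1/2 + ⋯ + 1/t)}`. -/
theorem stmt5 (t : ℕ) (ht : 1 ≤ t) :
    ∀ ε : ℝ, 0 < ε → ∃ Q : ℕ, ∀ (F : Type) [Field F] [Fintype F],
      Q ≤ Fintype.card F →
      |(∏ j ∈ Finset.Icc 1 t, ∏' i : ℕ,
          (1 - 1 / (Fintype.card F : ℝ) ^ ((i + 1) * j)) ^ (numIrred F j)) -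
        Real.exp (-(∑ j ∈ Finset.Icc 1 t, (1 : ℝ) / j))| < ε :=
  stmt5_general t
end

section
/- Fix an integer t \ge 1. There exist constants 0 < c_1 < c_2 < 1 (depending only on t) such that for every prime power q, the quantity \prod_{j=1}^t \prod_{i \ge 1} (1 - 1/q^{ij})^{N(q;j)} lies in the interval [c_1, c_2]. -/
open Polynomial Real

theorem Polynomial.Monic.eq_of_coeff_eq_of_natDegree_eq {R : Type*} [Semiring R] {p q : R[X]}
    (hp : p.Monic) (hq : q.Monic) (hdeg : p.natDegree = q.natDegree)
    (hcoeff : ∀ i < p.natDegree, p.coeff i = q.coeff i) : p = q := by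
  ext i
  rcases lt_trichotomy i p.natDegree with hi | rfl | hi
  · exact hcoeff i hi
  · rw [hp.coeff_natDegree, hdeg, hq.coeff_natDegree]
  · rw [coeff_eq_zero_of_natDegree_lt hi, coeff_eq_zero_of_natDegree_lt (hdeg ▸ hi)]

theorem numIrred_coeff_injective (F : Type) [Field F] [Fintype F] (j : ℕ) :
    Function.Injective fun p : {p : F[X] // p.Monic ∧ Irreducible p ∧ p.natDegree = j ∧
      p.coeff 0 ≠ 0} => fun i : Fin j => p.1.coeff i := by
  rintro ⟨p, hp, _, hpdeg, _⟩ ⟨q, hq, _, hqdeg, _⟩ hcoeff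
  refine Subtype.ext <| hp.eq_of_coeff_eq_of_natDegree_eq hq (hpdeg.trans hqdeg.symm) fun i hi => ?_
  exact congrFun hcoeff ⟨i, hpdeg ▸ hi⟩

theorem numIrred_le_card_pow (F : Type) [Field F] [Fintype F] (j : ℕ) :
    numIrred F j ≤ Fintype.card F ^ j := by
  simpa only [numIrred, Nat.card_eq_fintype_card, Fintype.card_fun, Fintype.card_fin] using
    Nat.card_le_card_of_injective _ (numIrred_coeff_injective F j)

theorem card_sub_one_le_numIrred_one (F : Type) [Field F] [Fintype F] :
    Fintype.card F - 1 ≤ numIrred F 1 := by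
  classical
  have := Finite.of_injective _ (numIrred_coeff_injective F 1)
  let linear (u : Fˣ) : {p : F[X] // p.Monic ∧ Irreducible p ∧ p.natDegree = 1 ∧
      p.coeff 0 ≠ 0} :=
    ⟨X - C (u : F), monic_X_sub_C _, irreducible_X_sub_C _, natDegree_X_sub_C _, by simp⟩
  have hlinear : Function.Injective linear := fun u v h => by
    simpa [linear, Units.ext_iff] using congrArg Subtype.val h
  rw [← Fintype.card_units, ← Nat.card_eq_fintype_card]
  exact Nat.card_le_card_of_injective linear hlinear

theorem Finset.prod_le_of_le_one_of_ne {ι R : Type*} [CommSemiring R] [PartialOrder R]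
    [IsOrderedRing R] {s : Finset ι} {f : ι → R} {a : ι} (ha : a ∈ s)
    (h₀ : ∀ i ∈ s, 0 ≤ f i) (h₁ : ∀ i ∈ s, i ≠ a → f i ≤ 1) : ∏ i ∈ s, f i ≤ f a := by
  classical
  rw [← Finset.mul_prod_erase _ _ ha]
  refine mul_le_of_le_one_right (h₀ a ha) (Finset.prod_le_one (fun i hi => ?_) fun i hi => ?_)
  · exact h₀ i (Finset.mem_of_mem_erase hi)
  · exact h₁ i (Finset.mem_of_mem_erase hi) (Finset.ne_of_mem_erase hi)

section EulerFunction

variable {r : ℝ}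

theorem one_sub_pow_succ_pos (hr₀ : 0 ≤ r) (hr₁ : r < 1) (i : ℕ) : 0 < 1 - r ^ (i + 1) :=
  sub_pos.2 (pow_lt_one₀ hr₀ hr₁ i.succ_ne_zero)

theorem summable_log_one_sub_pow_succ (hr₀ : 0 ≤ r) (hr₁ : r < 1) :
    Summable fun i : ℕ => log (1 - r ^ (i + 1)) := by
  have hgeom : Summable fun i : ℕ => r ^ (i + 1) := by
    simpa only [pow_succ'] using (summable_geometric_of_lt_one hr₀ hr₁).mul_left r
  simpa only [← sub_eq_add_neg] using Real.summable_log_one_add_of_summable hgeom.neg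

theorem tprod_one_sub_pow_succ_eq_exp (hr₀ : 0 ≤ r) (hr₁ : r < 1) :
    ∏' i : ℕ, (1 - r ^ (i + 1)) = exp (∑' i : ℕ, log (1 - r ^ (i + 1))) :=
  (Real.rexp_tsum_eq_tprod (one_sub_pow_succ_pos hr₀ hr₁)
    (summable_log_one_sub_pow_succ hr₀ hr₁)).symm

theorem multipliable_one_sub_pow_succ (hr₀ : 0 ≤ r) (hr₁ : r < 1) :
    Multipliable fun i : ℕ => 1 - r ^ (i + 1) :=
  Real.multipliable_of_summable_log (one_sub_pow_succ_pos hr₀ hr₁)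
    (summable_log_one_sub_pow_succ hr₀ hr₁)

theorem tprod_one_sub_pow_succ_le (hr₀ : 0 ≤ r) (hr₁ : r < 1) :
    ∏' i : ℕ, (1 - r ^ (i + 1)) ≤ 1 - r := by
  have htail : ∑' i : ℕ, log (1 - r ^ (i + 1 + 1)) ≤ 0 :=
    tsum_nonpos fun i => log_nonpos (one_sub_pow_succ_pos hr₀ hr₁ _).le
      (sub_le_self _ (by positivity))
  rw [tprod_one_sub_pow_succ_eq_exp hr₀ hr₁,
    (summable_log_one_sub_pow_succ hr₀ hr₁).tsum_eq_zero_add, zero_add, pow_one]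
  exact (exp_le_exp.2 (by linarith)).trans_eq (exp_log (sub_pos.2 hr₁))

theorem neg_two_mul_le_log_one_sub {x : ℝ} (hx₀ : 0 ≤ x) (hx : x ≤ 1 / 2) :
    -(2 * x) ≤ log (1 - x) := by
  have hinv : (1 - x)⁻¹ ≤ 1 + 2 * x := by
    rw [inv_le_iff_one_le_mul₀ (by linarith)]
    nlinarith
  linarith [one_sub_inv_le_log_of_pos (x := 1 - x) (by linarith)]

theorem exp_neg_four_mul_le_tprod_one_sub_pow_succ (hr₀ : 0 ≤ r) (hr : r ≤ 1 / 2) :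
    exp (-(4 * r)) ≤ ∏' i : ℕ, (1 - r ^ (i + 1)) := by
  have hr₁ : r < 1 := by linarith
  have hgeom : HasSum (fun i : ℕ => -(2 * r ^ (i + 1))) (-(2 * (r * (1 - r)⁻¹))) := by
    simpa only [pow_succ'] using ((hasSum_geometric_of_lt_one hr₀ hr₁).mul_left r).mul_left 2 |>.neg
  have hsum : -(2 * (r * (1 - r)⁻¹)) ≤ ∑' i : ℕ, log (1 - r ^ (i + 1)) :=
    hasSum_le (fun i => neg_two_mul_le_log_one_sub (by positivity)
        ((pow_le_of_le_one hr₀ hr₁.le i.succ_ne_zero).trans hr)) hgeom (summable_log_one_sub_pow_succ hr₀ hr₁).hasSum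
  have hinv : (1 - r)⁻¹ ≤ 2 := by
    rw [inv_le_iff_one_le_mul₀ (by linarith)]
    linarith
  have : -(4 * r) ≤ -(2 * (r * (1 - r)⁻¹)) := by nlinarith
  rw [tprod_one_sub_pow_succ_eq_exp hr₀ hr₁]
  exact exp_le_exp.2 (by linarith)

theorem tprod_one_sub_pow_succ_pos (hr₀ : 0 ≤ r) (hr₁ : r < 1) :
    0 < ∏' i : ℕ, (1 - r ^ (i + 1)) :=
  tprod_one_sub_pow_succ_eq_exp hr₀ hr₁ ▸ exp_pos _

theorem tprod_one_sub_pow_succ_pow_le (hr₀ : 0 ≤ r) (hr₁ : r < 1) (N : ℕ) :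
    ∏' i : ℕ, (1 - r ^ (i + 1)) ^ N ≤ (1 - r) ^ N := by
  rw [(multipliable_one_sub_pow_succ hr₀ hr₁).tprod_pow]
  exact pow_le_pow_left₀ (tprod_one_sub_pow_succ_pos hr₀ hr₁).le
    (tprod_one_sub_pow_succ_le hr₀ hr₁) N

theorem exp_neg_four_le_tprod_one_sub_pow_succ_pow (hr₀ : 0 ≤ r) (hr : r ≤ 1 / 2) {N : ℕ}
    (hN : N * r ≤ 1) : exp (-4) ≤ ∏' i : ℕ, (1 - r ^ (i + 1)) ^ N := by
  rw [(multipliable_one_sub_pow_succ hr₀ (by linarith)).tprod_pow]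
  calc exp (-4) ≤ exp (-(4 * r)) ^ N := by
        rw [← exp_nat_mul]
        exact exp_le_exp.2 (by linarith)
    _ ≤ _ := pow_le_pow_left₀ (exp_pos _).le (exp_neg_four_mul_le_tprod_one_sub_pow_succ hr₀ hr) N

end EulerFunction

theorem one_sub_one_div_pow_le_exp_neg_half {q : ℝ} {N : ℕ} (hq : 2 ≤ q) (hN : q - 1 ≤ N) :
    (1 - 1 / q) ^ N ≤ exp (-(1 / 2)) := by
  have hq₀ : 0 < q := by linarith
  calc (1 - 1 / q) ^ N ≤ exp (-(1 / q)) ^ N := by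
        refine pow_le_pow_left₀ ?_ (one_sub_le_exp_neg _) N
        rw [sub_nonneg, div_le_one hq₀]
        linarith
    _ = exp (-(N / q)) := by rw [← exp_nat_mul]; ring_nf
    _ ≤ exp (-(1 / 2)) := by
        rw [exp_le_exp, neg_le_neg_iff, le_div_iff₀ hq₀]
        linarith

noncomputable def degreeFactor (F : Type) [Field F] [Fintype F] (j : ℕ) : ℝ :=
  ∏' i : ℕ, (1 - 1 / (Fintype.card F : ℝ) ^ ((i + 1) * j)) ^ numIrred F j

section DegreeFactor

variable (F : Type) [Field F] [Fintype F] {j : ℕ}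

theorem degreeFactor_eq :
    degreeFactor F j =
      ∏' i : ℕ, (1 - (1 / (Fintype.card F : ℝ) ^ j) ^ (i + 1)) ^ numIrred F j := by
  simp only [degreeFactor, one_div_pow, ← pow_mul, mul_comm]

theorem one_div_card_pow_le_half (hj : j ≠ 0) : 1 / (Fintype.card F : ℝ) ^ j ≤ 1 / 2 := by
  have hq : (2 : ℝ) ≤ Fintype.card F := by exact_mod_cast Fintype.one_lt_card
  gcongr
  exact hq.trans (le_self_pow₀ (by linarith) hj)

theorem exp_neg_four_le_degreeFactor (hj : j ≠ 0) : exp (-4) ≤ degreeFactor F j := by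
  rw [degreeFactor_eq]
  refine exp_neg_four_le_tprod_one_sub_pow_succ_pow (by positivity)
    (one_div_card_pow_le_half F hj) ?_
  rw [mul_one_div, div_le_one (by positivity)]
  exact_mod_cast numIrred_le_card_pow F j

theorem degreeFactor_nonneg (hj : j ≠ 0) : 0 ≤ degreeFactor F j :=
  (exp_pos _).le.trans (exp_neg_four_le_degreeFactor F hj)

theorem degreeFactor_le_one_sub_pow (hj : j ≠ 0) :
    degreeFactor F j ≤ (1 - 1 / (Fintype.card F : ℝ) ^ j) ^ numIrred F j := by
  rw [degreeFactor_eq]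
  exact tprod_one_sub_pow_succ_pow_le (by positivity)
    ((one_div_card_pow_le_half F hj).trans_lt (by norm_num)) _

theorem degreeFactor_le_one (hj : j ≠ 0) : degreeFactor F j ≤ 1 := by
  refine (degreeFactor_le_one_sub_pow F hj).trans
    (pow_le_one₀ ?_ (sub_le_self _ (by positivity)))
  linarith [one_div_card_pow_le_half F hj]

theorem degreeFactor_one_le_exp_neg_half : degreeFactor F 1 ≤ exp (-(1 / 2)) := by
  have hq : (2 : ℝ) ≤ Fintype.card F := by exact_mod_cast Fintype.one_lt_card
  refine (degreeFactor_le_one_sub_pow F one_ne_zero).trans ?_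
  rw [pow_one]
  refine one_sub_one_div_pow_le_exp_neg_half hq ?_
  rw [sub_le_iff_le_add]
  exact_mod_cast Nat.sub_le_iff_le_add.1 (card_sub_one_le_numIrred_one F)

end DegreeFactor

/-- For fixed `t ≥ 1`, there are constants `0 < c₁ < c₂ < 1` depending only on `t`
such that for every prime power `q` (i.e. the cardinality of any finite field `F`),
`∏_{j=1}^t ∏_{i ≥ 1} (1 - 1/q^{ij})^{N(q;j)}` lies in `[c₁, c₂]`. -/
theorem stmt6 (t : ℕ) (ht : 1 ≤ t) :
    ∃ c₁ c₂ : ℝ, 0 < c₁ ∧ c₁ < c₂ ∧ c₂ < 1 ∧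
      ∀ (F : Type) [Field F] [Fintype F],
        (∏ j ∈ Finset.Icc 1 t, ∏' i : ℕ,
            (1 - 1 / (Fintype.card F : ℝ) ^ ((i + 1) * j)) ^ (numIrred F j)) ∈
          Set.Icc c₁ c₂ := by
  have hexp : exp (-4) ^ t < exp (-(1 / 2)) := by
    rw [← exp_nat_mul, exp_lt_exp]
    have : (1 : ℝ) ≤ t := by exact_mod_cast ht
    linarith
  refine ⟨exp (-4) ^ t, exp (-(1 / 2)), by positivity, hexp, exp_lt_one_iff.2 (by norm_num),
    fun F _ _ => ?_⟩
  have hne : ∀ j ∈ Finset.Icc 1 t, j ≠ 0 := fun j hj => by grind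
  change ∏ j ∈ Finset.Icc 1 t, degreeFactor F j ∈ Set.Icc _ _
  constructor
  · calc exp (-4) ^ t = ∏ j ∈ Finset.Icc 1 t, exp (-4) := by simp
      _ ≤ ∏ j ∈ Finset.Icc 1 t, degreeFactor F j :=
        Finset.prod_le_prod (fun _ _ => (exp_pos _).le) fun j hj =>
          exp_neg_four_le_degreeFactor F (hne j hj)
  · calc ∏ j ∈ Finset.Icc 1 t, degreeFactor F j ≤ degreeFactor F 1 :=
          Finset.prod_le_of_le_one_of_ne (Finset.mem_Icc.2 ⟨le_rfl, ht⟩)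
            (fun j hj => degreeFactor_nonneg F (hne j hj))
            fun j hj _ => degreeFactor_le_one F (hne j hj)
      _ ≤ exp (-(1 / 2)) := degreeFactor_one_le_exp_neg_half F
end

section
/- Let G be a finite group acting transitively on a finite set \Omega, let S be a normal subgroup of G acting transitively on \Omega, let x \in G, and let A be a nonempty S-stable (under conjugation) subset of a coset Sy. Then the probability that x and a uniformly random element g of A have a common fixed point on \Omega is at most fpr(x, \Omega) \cdot (1/|A|) \sum_{g \in A} fp(g, \Omega). -/
open scoped Classical

/-- Let `G` act transitively on a finite set `Ω`, let `S ⊴ G` be transitive on `Ω`,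
`x ∈ G`, and let `A` be a nonempty subset of the coset `Sy` stable under `S`-conjugation.
Then the probability that `x` and a uniformly random element of `A` have a common fixed
point on `Ω` is at most `fpr(x, Ω)` times the average number of fixed points on `Ω` of
an element of `A`. -/
theorem stmt10 (G : Type*) [Group G] [Fintype G] (Ω : Type*) [Fintype Ω] [Nonempty Ω]
    [MulAction G Ω] [MulAction.IsPretransitive G Ω]
    (S : Subgroup G) [S.Normal] (hS : ∀ ω₁ ω₂ : Ω, ∃ s ∈ S, s • ω₁ = ω₂)
    (x y : G) (A : Set G) (hne : A.Nonempty)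
    (hcoset : ∀ a ∈ A, a * y⁻¹ ∈ S)
    (hstable : ∀ s ∈ S, ∀ a ∈ A, s * a * s⁻¹ ∈ A) :
    (Nat.card {g : G // g ∈ A ∧ ∃ ω : Ω, x • ω = ω ∧ g • ω = ω} : ℝ) / Nat.card A ≤
      ((Nat.card {ω : Ω // x • ω = ω} : ℝ) / Fintype.card Ω) *
        ((1 / (Nat.card A : ℝ)) *
          ∑ g : A, (Nat.card {ω : Ω // (g : G) • ω = ω} : ℝ)) := by
  classical
  set Afin : Finset G := A.toFinset with hAfin
  set F : Finset Ω := Finset.univ.filter (fun ω => x • ω = ω) with hF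
  set n : Ω → ℕ := fun ω => (Afin.filter (fun g => g • ω = ω)).card with hn
  obtain ⟨ω₀⟩ := ‹Nonempty Ω›
  -- Step A: n is constant
  have hconst : ∀ ω, n ω = n ω₀ := by
    intro ω
    obtain ⟨s, hsS, hs⟩ := hS ω₀ ω
    apply Finset.card_bij (fun g _ => s⁻¹ * g * s)
    · intro g hg
      simp only [Finset.mem_filter, Set.mem_toFinset, hAfin] at hg ⊢
      obtain ⟨hgA, hgω⟩ := hg
      constructor
      · have := hstable s⁻¹ (S.inv_mem hsS) g hgA
        simpa using this
      · have : (s⁻¹ * g * s) • ω₀ = s⁻¹ • g • s • ω₀ := by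
          simp [mul_smul]
        rw [this, hs, hgω, ← hs]
        simp [← mul_smul]
    · intro g₁ h₁ g₂ h₂ h
      have := mul_left_cancel (mul_right_cancel h)
      exact this
    · intro g hg
      refine ⟨s * g * s⁻¹, ?_, by group⟩
      simp only [Finset.mem_filter, Set.mem_toFinset, hAfin] at hg ⊢
      obtain ⟨hgA, hgω⟩ := hg
      refine ⟨hstable s hsS g hgA, ?_⟩
      have h1 : (s * g * s⁻¹) • ω = s • g • s⁻¹ • ω := by simp [mul_smul]
      have h2 : s⁻¹ • ω = ω₀ := by rw [← hs, inv_smul_smul]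
      rw [h1, h2, hgω, hs]
  -- Step B: double counting
  have hsum : ∑ g ∈ Afin, ((Finset.univ : Finset Ω).filter (fun ω => g • ω = ω)).card
      = Fintype.card Ω * n ω₀ := by
    calc ∑ g ∈ Afin, ((Finset.univ : Finset Ω).filter (fun ω => g • ω = ω)).card
        = ∑ g ∈ Afin, ∑ ω : Ω, if g • ω = ω then 1 else 0 :=
          Finset.sum_congr rfl fun g _ => Finset.card_filter _ _
      _ = ∑ ω : Ω, ∑ g ∈ Afin, if g • ω = ω then 1 else 0 := Finset.sum_comm
      _ = ∑ ω : Ω, n ω :=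
          Finset.sum_congr rfl fun ω _ => (Finset.card_filter _ _).symm
      _ = Fintype.card Ω * n ω₀ := by
          rw [Finset.sum_congr rfl (fun ω _ => hconst ω)]
          simp [mul_comm]
  -- Step C
  set Bfin : Finset G := Afin.filter (fun g => ∃ ω : Ω, x • ω = ω ∧ g • ω = ω) with hB
  have hBle : Bfin.card ≤ F.card * n ω₀ := by
    have hsub : Bfin ⊆ F.biUnion (fun ω => Afin.filter (fun g => g • ω = ω)) := by
      intro g hg
      simp only [hB, Finset.mem_filter] at hg
      obtain ⟨hgA, ω, hxω, hgω⟩ := hg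
      refine Finset.mem_biUnion.2 ⟨ω, ?_, ?_⟩
      · simp [hF, hxω]
      · simp [Finset.mem_filter, hgA, hgω]
    calc Bfin.card ≤ (F.biUnion (fun ω => Afin.filter (fun g => g • ω = ω))).card :=
          Finset.card_le_card hsub
      _ ≤ ∑ ω ∈ F, (Afin.filter (fun g => g • ω = ω)).card := Finset.card_biUnion_le
      _ = F.card * n ω₀ := by
          rw [Finset.sum_congr rfl (fun ω _ => hconst ω)]
          simp [mul_comm]
  -- conversions
  have hcardA : Nat.card A = Afin.card := by
    rw [Nat.card_eq_fintype_card, ← Set.toFinset_card]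
  have hcardB : Nat.card {g : G // g ∈ A ∧ ∃ ω : Ω, x • ω = ω ∧ g • ω = ω} = Bfin.card := by
    rw [Nat.card_eq_fintype_card, Fintype.card_subtype, hB]
    congr 1
    ext g
    simp [hAfin]
  have hcardF : Nat.card {ω : Ω // x • ω = ω} = F.card := by
    rw [Nat.card_eq_fintype_card, Fintype.card_subtype]
  have hterm : ∀ g : G, (Nat.card {ω : Ω // g • ω = ω} : ℝ)
      = (((Finset.univ : Finset Ω).filter (fun ω => g • ω = ω)).card : ℝ) := by
    intro g
    rw [Nat.card_eq_fintype_card, Fintype.card_subtype]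
  have hsum2 : ∑ g : A, (Nat.card {ω : Ω // (g : G) • ω = ω} : ℝ)
      = (Fintype.card Ω * n ω₀ : ℕ) := by
    rw [← hsum]
    push_cast
    rw [← Finset.sum_coe_sort Afin
      (fun g => (((Finset.univ : Finset Ω).filter (fun ω => g • ω = ω)).card : ℝ))]
    exact Fintype.sum_equiv
      (Equiv.subtypeEquivRight (fun g => (Set.mem_toFinset (s := A)).symm)) _ _
      (fun g => by rw [hterm]; rfl)
  rw [hcardA, hcardB, hcardF, hsum2]
  have hA0 : (0:ℝ) < Afin.card := by
    have : Afin.Nonempty := by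
      obtain ⟨a, ha⟩ := hne
      exact ⟨a, by rwa [hAfin, Set.mem_toFinset]⟩
    exact_mod_cast Finset.card_pos.2 this
  have hΩ0 : (0:ℝ) < Fintype.card Ω := by exact_mod_cast Fintype.card_pos
  have key : ((F.card : ℝ) / Fintype.card Ω) * ((1 / (Afin.card : ℝ)) *
      ((Fintype.card Ω * n ω₀ : ℕ) : ℝ)) = ((F.card * n ω₀ : ℕ) : ℝ) / Afin.card := by
    push_cast
    field_simp
  rw [key]
  have : (Bfin.card : ℝ) ≤ ((F.card * n ω₀ : ℕ) : ℝ) := by exact_mod_cast hBle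
  gcongr
end

section
/- Let G be a finite group acting transitively on a finite set \Omega, let S be a transitive normal subgroup of G, let x \in G and y \in G. Then the probability that x and a uniformly random element of the coset Sy have a common fixed point on \Omega is at most fpr(x, \Omega) = fp(x, \Omega)/|\Omega|. -/
/-- Let `G` act transitively on a finite set `Ω`, let `S ⊴ G` be transitive on `Ω`, and
let `x, y ∈ G`. Then the probability that `x` and a uniformly random element of the coset
`Sy` have a common fixed point on `Ω` is at most `fpr(x, Ω) = fp(x, Ω)/|Ω|`. -/
theorem stmt11 (G : Type*) [Group G] [Fintype G] (Ω : Type*) [Fintype Ω] [Nonempty Ω]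
    [MulAction G Ω] [MulAction.IsPretransitive G Ω]
    (S : Subgroup G) [S.Normal] (hS : ∀ ω₁ ω₂ : Ω, ∃ s ∈ S, s • ω₁ = ω₂)
    (x y : G) :
    (Nat.card {s : S // ∃ ω : Ω, x • ω = ω ∧ ((s : G) * y) • ω = ω} : ℝ) / Nat.card S ≤
      (Nat.card {ω : Ω // x • ω = ω} : ℝ) / Fintype.card Ω := by
  classical
  -- S acts pretransitively on Ω
  have hpre : MulAction.IsPretransitive S Ω := by
    constructor
    intro a b
    obtain ⟨s, hs, hsab⟩ := hS a b
    exact ⟨⟨s, hs⟩, hsab⟩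
  -- Key count: for each ω, #{s ∈ S : (s*y)•ω = ω} * |Ω| = |S|
  have key : ∀ ω : Ω, Nat.card {s : S // ((s : G) * y) • ω = ω} * Fintype.card Ω
      = Nat.card S := by
    intro ω
    obtain ⟨s₀', hs₀', hs₀⟩ := hS (y • ω) ω
    set s₀ : S := ⟨s₀', hs₀'⟩
    have hs₀ : (s₀ : G) • (y • ω) = ω := hs₀
    have e : {s : S // ((s : G) * y) • ω = ω} ≃ MulAction.stabilizer S (y • ω) :=
      { toFun := fun s => ⟨s₀⁻¹ * s.1, by
          have h1 : (s.1 : S) • (y • ω) = ω := by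
            rw [Subgroup.smul_def, ← mul_smul]; exact s.2
          have hs₀'' : (s₀ : S) • (y • ω) = ω := hs₀
          show (s₀⁻¹ * s.1) • (y • ω) = y • ω
          rw [mul_smul, h1, inv_smul_eq_iff]
          exact hs₀''.symm⟩
        invFun := fun t => ⟨s₀ * t.1, by
          have ht : (t.1 : S) • (y • ω) = y • ω := t.2
          rw [mul_smul]
          show ((s₀ * t.1 : S) : G) • (y • ω) = ω
          rw [← Subgroup.smul_def, mul_smul, ht, Subgroup.smul_def, hs₀]⟩
        left_inv := fun s => by ext; simp [mul_assoc]
        right_inv := fun t => by ext; simp }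
    rw [Nat.card_congr e]
    -- orbit-stabilizer for S acting on Ω
    have horb : MulAction.orbit S ω = Set.univ := MulAction.orbit_eq_univ S ω
    have := MulAction.card_orbit_mul_card_stabilizer_eq_card_group S ω
    have hcard : Fintype.card (MulAction.orbit S ω) = Fintype.card Ω := by
      apply Fintype.card_congr
      exact (Equiv.setCongr horb).trans (Equiv.Set.univ Ω)
    rw [hcard] at this
    have hst : Nat.card (MulAction.stabilizer S (y • ω))
        = Nat.card (MulAction.stabilizer S ω) := by
      obtain ⟨g, hg⟩ := MulAction.exists_smul_eq S (y • ω) ω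
      exact Nat.card_congr (MulAction.stabilizerEquivStabilizerOfOrbitRel
        (by exact ⟨g, hg⟩ : MulAction.orbitRel S Ω ω (y • ω))).symm.toEquiv
    rw [hst, Nat.card_eq_fintype_card, Nat.card_eq_fintype_card, mul_comm]
    exact this
  -- injection into sigma type
  set Fix := {ω : Ω // x • ω = ω}
  set A := {s : S // ∃ ω : Ω, x • ω = ω ∧ ((s : G) * y) • ω = ω}
  have hinj : Nat.card A ≤ Nat.card (Σ ω : Fix, {s : S // ((s : G) * y) • (ω : Ω) = ω}) := by
    apply Nat.card_le_card_of_injective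
      (f := fun a => ⟨⟨a.2.choose, a.2.choose_spec.1⟩, ⟨a.1, a.2.choose_spec.2⟩⟩)
    intro a b hab
    exact Subtype.ext (congrArg (fun p : Σ ω : Fix, {s : S // ((s : G) * y) • (ω : Ω) = ω}
      => p.2.1) hab)
  have hsig : Nat.card (Σ ω : Fix, {s : S // ((s : G) * y) • (ω : Ω) = ω})
      = ∑ ω : Fix, Nat.card {s : S // ((s : G) * y) • (ω : Ω) = ω} := by
    simp [Nat.card_eq_fintype_card, Fintype.card_sigma]
  have hnat : Nat.card A * Fintype.card Ω ≤ Nat.card Fix * Nat.card S := by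
    calc Nat.card A * Fintype.card Ω
        ≤ (∑ ω : Fix, Nat.card {s : S // ((s : G) * y) • (ω : Ω) = ω}) * Fintype.card Ω := by
          rw [← hsig]; exact Nat.mul_le_mul_right _ hinj
      _ = ∑ ω : Fix, Nat.card {s : S // ((s : G) * y) • (ω : Ω) = ω} * Fintype.card Ω := by
          rw [Finset.sum_mul]
      _ = ∑ _ω : Fix, Nat.card S := by
          exact Finset.sum_congr rfl fun ω _ => key ω
      _ = Nat.card Fix * Nat.card S := by
          simp [Finset.sum_const, Nat.card_eq_fintype_card, mul_comm]
  have hSpos : (0 : ℝ) < Nat.card S := by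
    have : 0 < Nat.card S := Nat.card_pos
    exact_mod_cast this
  have hΩpos : (0 : ℝ) < Fintype.card Ω := by
    have : 0 < Fintype.card Ω := Fintype.card_pos
    exact_mod_cast this
  rw [div_le_div_iff₀ hSpos hΩpos]
  exact_mod_cast hnat
end

section
/- Let g \in GL_n(F_q) be unipotent (i.e., g - 1 is nilpotent), and set m = dim [V, g] where V = F_q^n and [V, g] = Im(g - 1). Suppose W is a 1-dimensional subspace fixed by g admitting a g-invariant complement W'. Then [V, g] \le W', hence W \cap [V, g] = 0, and the number of g-invariant complements of W is exactly q^{n - m - 1}. -/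
/-!
Since `g - 1` is nilpotent and preserves the line `W`, it kills `W`; as `V = W + W''` for any
complement `W''`, we get `[V, g] = (g - 1) W''`, so `g W'' ⊆ W''` iff `[V, g] ⊆ W''`, and since
`g` is injective the inclusion is an equality. Complements of `W` containing a subspace `R` with
`W ∩ R = 0` are parametrized, via the difference of the projections onto `W`, by
`Hom(V / (W ⊕ R), W)`; with `R = [V, g]` this space has dimension `n - m - 1`.
-/

open Submodule LinearMap Module

lemma Module.End.eq_zero_of_isNilpotent_of_finrank_eq_one {K M : Type*} [Field K]
    [AddCommGroup M] [Module K M] (hM : finrank K M = 1) {f : End K M} (hf : IsNilpotent f) :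
    f = 0 := by
  obtain ⟨c, rfl, -⟩ := f.existsUnique_eq_smul_id_of_finrank_eq_one hM
  have : Nontrivial M := Module.nontrivial_of_finrank_eq_succ hM
  rw [← Module.algebraMap_end_eq_smul_id, IsNilpotent.map_iff (algebraMap K (End K M)).injective,
    isNilpotent_iff_eq_zero] at hf
  simp [hf]

namespace Submodule

lemma le_ker_of_isNilpotent_of_finrank_eq_one {K M : Type*} [Field K]
    [AddCommGroup M] [Module K M] {f : End K M} (hf : IsNilpotent f) {W : Submodule K M}
    (hW : finrank K W = 1) (hWf : Set.MapsTo f W W) : W ≤ ker f := fun w hw =>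
  congr(($(Module.End.eq_zero_of_isNilpotent_of_finrank_eq_one hW
    (Module.End.isNilpotent.restrict hWf hf)) ⟨w, hw⟩ : M))

section RangeSubId

variable {R M : Type*} [Ring R] [AddCommGroup M] [Module R M] {g : End R M} {p : Submodule R M}

lemma map_le_of_range_sub_id_le (h : range (g - LinearMap.id) ≤ p) : p.map g ≤ p := by
  rintro _ ⟨v, hv, rfl⟩
  have hgv : g v = v + (g - LinearMap.id : End R M) v := by simp
  exact hgv ▸ p.add_mem hv (h (mem_range_self _ v))

lemma range_sub_id_le_of_map_le {W : Submodule R M} (hW : W ≤ ker (g - LinearMap.id))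
    (hWp : Codisjoint W p) (h : p.map g ≤ p) : range (g - LinearMap.id) ≤ p := by
  rintro _ ⟨v, rfl⟩
  obtain ⟨w, hw, u, hu, rfl⟩ := mem_sup.mp (hWp.eq_top ▸ mem_top : v ∈ W ⊔ p)
  rw [map_add, hW hw, zero_add, LinearMap.sub_apply, LinearMap.id_apply]
  exact p.sub_mem (h (mem_map_of_mem hu)) hu

end RangeSubId

lemma map_eq_self_iff_range_sub_id_le {K V : Type*} [Field K] [AddCommGroup V]
    [Module K V] [FiniteDimensional K V] {g : End K V} (hg : Function.Injective g)
    {W p : Submodule K V} (hW : W ≤ ker (g - LinearMap.id)) (hWp : Codisjoint W p) :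
    p.map g = p ↔ range (g - LinearMap.id) ≤ p := by
  refine ⟨fun h => range_sub_id_le_of_map_le hW hWp h.le, fun h => ?_⟩
  exact eq_of_le_of_finrank_eq (map_le_of_range_sub_id_le h)
    (equivMapOfInjective g hg p).finrank_eq.symm

section ComplementsContaining

variable {R E : Type*} [Ring R] [AddCommGroup E] [Module R E] {p q r : Submodule R E}

lemma sup_le_ker_projectionOnto_sub {q' : Submodule R E} (hpq : IsCompl p q)
    (hpq' : IsCompl p q') (hrq : r ≤ q) (hrq' : r ≤ q') :
    p ⊔ r ≤ ker (projectionOnto p q' hpq' - projectionOnto p q hpq) := by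
  refine sup_le (fun x hx => ?_) (fun x hx => ?_)
  · simp [projectionOnto_apply_of_mem_left _ hx]
  · simp [projectionOnto_apply_of_mem_right _ (hrq hx),
      projectionOnto_apply_of_mem_right _ (hrq' hx)]

lemma projectionOnto_add_comp_mkQ_apply_left (hpq : IsCompl p q)
    (φ : (E ⧸ (p ⊔ r)) →ₗ[R] p) (x : p) :
    (projectionOnto p q hpq + φ ∘ₗ (p ⊔ r).mkQ) x = x := by
  simp [(Quotient.mk_eq_zero _).mpr (mem_sup_left x.2)]

lemma le_ker_projectionOnto_add_comp_mkQ (hpq : IsCompl p q) (hrq : r ≤ q)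
    (φ : (E ⧸ (p ⊔ r)) →ₗ[R] p) :
    r ≤ ker (projectionOnto p q hpq + φ ∘ₗ (p ⊔ r).mkQ) := fun x hx => by
  simp [projectionOnto_apply_of_mem_right _ (hrq hx),
    (Quotient.mk_eq_zero _).mpr (mem_sup_right hx)]

/-- Relative to a base complement `q ⊇ r`, a complement `q' ⊇ r` of `p` is recorded by the
difference of the projections onto `p` along `q'` and along `q`, which vanishes on `p ⊔ r`. -/
noncomputable def isComplLEEquiv (hpq : IsCompl p q) (hrq : r ≤ q) :
    {q' : Submodule R E // IsCompl p q' ∧ r ≤ q'} ≃ ((E ⧸ (p ⊔ r)) →ₗ[R] p) where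
  toFun q' := (p ⊔ r).liftQ _ (sup_le_ker_projectionOnto_sub hpq q'.2.1 hrq q'.2.2)
  invFun φ := ⟨ker (projectionOnto p q hpq + φ ∘ₗ (p ⊔ r).mkQ),
    isCompl_of_proj (projectionOnto_add_comp_mkQ_apply_left hpq φ),
    le_ker_projectionOnto_add_comp_mkQ hpq hrq φ⟩
  left_inv q' := Subtype.ext <| by
    simp only [liftQ_mkQ, add_sub_cancel, ker_projectionOnto]
  right_inv φ := linearMap_qext _ <| by
    rw [liftQ_mkQ, projectionOnto_of_proj _ (projectionOnto_add_comp_mkQ_apply_left hpq φ),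
      add_sub_cancel_left]

theorem natCard_isCompl_le {K V : Type*} [Field K] [Finite K] [AddCommGroup V] [Module K V]
    [FiniteDimensional K V] {p q r : Submodule K V} (hpq : IsCompl p q) (hrq : r ≤ q) :
    Nat.card {q' : Submodule K V // IsCompl p q' ∧ r ≤ q'} =
      Nat.card K ^ ((finrank K V - finrank K ↥(p ⊔ r)) * finrank K p) := by
  rw [Nat.card_congr (isComplLEEquiv hpq hrq), Module.natCard_eq_pow_finrank (K := K),
    finrank_linearMap, finrank_quotient]

end ComplementsContaining

end Submodule

theorem stmt13_general (F : Type*) [Field F] [Fintype F]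
    (V : Type*) [AddCommGroup V] [Module F V] [FiniteDimensional F V]
    (g : V →ₗ[F] V)
    (hunip : IsNilpotent (g - LinearMap.id))
    (W : Submodule F V) (hW1 : Module.finrank F W = 1) (hWg : W.map g = W)
    (W' : Submodule F V) (hc : IsCompl W W') (hW'g : W'.map g = W') :
    LinearMap.range (g - LinearMap.id) ≤ W' ∧
    W ⊓ LinearMap.range (g - LinearMap.id) = ⊥ ∧
    Nat.card {W'' : Submodule F V // IsCompl W W'' ∧ W''.map g = W''} =
      Fintype.card F ^
        (Module.finrank F V - Module.finrank F (LinearMap.range (g - LinearMap.id)) - 1) := by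
  set R := range (g - LinearMap.id)
  have hg : Function.Bijective g := by
    rw [← Module.End.isUnit_iff, ← add_sub_cancel (1 : End F V) g, Module.End.one_eq_id]
    exact hunip.isUnit_one_add
  have hWker : W ≤ ker (g - LinearMap.id) :=
    le_ker_of_isNilpotent_of_finrank_eq_one hunip hW1 fun w hw =>
      W.sub_mem (hWg ▸ mem_map_of_mem hw) hw
  have hinv (p : Submodule F V) (hp : IsCompl W p) : p.map g = p ↔ R ≤ p :=
    map_eq_self_iff_range_sub_id_le hg.1 hWker hp.codisjoint
  have hR : R ≤ W' := (hinv W' hc).1 hW'g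
  have hWR : W ⊓ R = ⊥ := (hc.disjoint.mono_right hR).eq_bot
  have hsup : finrank F ↥(W ⊔ R) = 1 + finrank F R := by
    rw [← add_zero (finrank F _), ← finrank_bot F V, ← hWR, finrank_sup_add_finrank_inf_eq,
      hW1]
  refine ⟨hR, hWR, ?_⟩
  rw [Nat.card_congr (Equiv.subtypeEquivRight fun p => and_congr_right (hinv p)),
    natCard_isCompl_le hc hR, hsup, hW1, mul_one, Nat.card_eq_fintype_card, Nat.sub_sub, add_comm]

/-- Let `g` be a unipotent invertible linear endomorphism of a finite-dimensional space
`V` over `F_q`, `m = dim [V,g]` where `[V,g] = Im(g-1)`, and let `W` be a `1`-dimensional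
`g`-invariant subspace admitting a `g`-invariant complement `W'`. Then `[V,g] ≤ W'`
(for any such complement), `W ∩ [V,g] = 0`, and the number of `g`-invariant complements
of `W` is exactly `q^(n-m-1)`. -/
theorem stmt13 (F : Type*) [Field F] [Fintype F]
    (V : Type*) [AddCommGroup V] [Module F V] [FiniteDimensional F V]
    (g : V →ₗ[F] V) (hbij : Function.Bijective g)
    (hunip : IsNilpotent (g - LinearMap.id))
    (W : Submodule F V) (hW1 : Module.finrank F W = 1) (hWg : W.map g = W)
    (W' : Submodule F V) (hc : IsCompl W W') (hW'g : W'.map g = W') :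
    LinearMap.range (g - LinearMap.id) ≤ W' ∧
    W ⊓ LinearMap.range (g - LinearMap.id) = ⊥ ∧
    Nat.card {W'' : Submodule F V // IsCompl W W'' ∧ W''.map g = W''} =
      Fintype.card F ^
        (Module.finrank F V - Module.finrank F (LinearMap.range (g - LinearMap.id)) - 1) :=
  stmt13_general F V g hunip W hW1 hWg W' hc hW'g
end

section
/- Let 1 \le t \le k < n/2, let A be the set of permutations in S_n fixing no subset of size at most t, and let \Omega be the set of k-element subsets of \{1, \ldots, n\}, with S_n acting naturally. Let a_k(t) (resp. a_{n-k}(t)) be the proportion of elements of S_k (resp. S_{n-k}) fixing no set of size at most t. Then the expected number of fixed points on \Omega of a uniformly random element of A equals a_k(t) \cdot a_{n-k}(t) \cdot k! (n-k)! \binom{n}{k} / |A|, which equals a_k(t)\, a_{n-k}(t)\, n! / |A|. -/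
/-!
Double count the pairs `(σ, X)` with `σ ∈ A` and `X` a `k`-set fixed by `σ`. For a fixed `X`,
a permutation preserving `X` is a pair of permutations of `X` and of its complement, and it lies
in `A` iff both parts fix no nonempty set of size at most `t`: a small set fixed by `σ` meets `X`
or its complement in a nonempty small set fixed by the corresponding part. Hence each of the
`n.choose k` sets `X` is fixed by `k! a_k(t) · (n-k)! a_{n-k}(t)` elements of `A`, and
`n.choose k * k! * (n-k)! = n!`.
-/

open scoped Classical

noncomputable def permProp (n t : ℕ) : ℝ :=
  (Nat.card {σ : Equiv.Perm (Fin n) //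
      ∀ s : Finset (Fin n), 1 ≤ s.card → s.card ≤ t → s.image σ ≠ s} : ℝ) /
    (Nat.factorial n : ℝ)

open Equiv Finset

namespace Equiv.Perm

variable {α β : Type*} [DecidableEq α] [DecidableEq β] {t : ℕ}

def FixesNoSmallSet (t : ℕ) (σ : Perm α) : Prop :=
  ∀ s : Finset α, 1 ≤ #s → #s ≤ t → s.image σ ≠ s

-- Built from the unfolded predicate, so that sums over `{σ // FixesNoSmallSet t σ}` agree
-- definitionally with sums over the unfolded subtype (rather than going through `Classical.dec`).
instance [Fintype α] (t : ℕ) : DecidablePred (FixesNoSmallSet t : Perm α → Prop) := fun σ =>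
  inferInstanceAs (Decidable (∀ s : Finset α, 1 ≤ #s → #s ≤ t → s.image σ ≠ s))

theorem FixesNoSmallSet.of_semiconj {e : α ↪ β} {f : Perm β} {g : Perm α}
    (h : ∀ a, f (e a) = e (g a)) (hf : FixesNoSmallSet t f) : FixesNoSmallSet t g := by
  intro s h1 h2 hs
  refine hf (s.map e) (by rwa [card_map]) (by rwa [card_map]) ?_
  rw [map_eq_image, image_comm h, hs]

theorem fixesNoSmallSet_permCongr_iff (e : α ≃ β) {σ : Perm α} :
    FixesNoSmallSet t (e.permCongr σ) ↔ FixesNoSmallSet t σ :=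
  ⟨.of_semiconj (e := e.toEmbedding) fun a => by simp [permCongr_apply],
    .of_semiconj (e := e.symm.toEmbedding) fun b => by simp [permCongr_apply]⟩

theorem card_fixesNoSmallSet_congr (e : α ≃ β) (t : ℕ) :
    Nat.card {σ : Perm α // FixesNoSmallSet t σ} =
      Nat.card {σ : Perm β // FixesNoSmallSet t σ} :=
  Nat.card_congr <| e.permCongr.subtypeEquiv fun _ => (fixesNoSmallSet_permCongr_iff e).symm

theorem image_eq_iff_forall_mem_iff (σ : Perm α) (s : Finset α) :
    s.image σ = s ↔ ∀ a, σ a ∈ s ↔ a ∈ s := by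
  rw [← coe_toEmbedding, ← map_eq_image, Finset.ext_iff, ← σ.forall_congr_right]
  simp only [mem_map_equiv, symm_apply_apply]
  exact forall_congr' fun _ => Iff.comm

theorem image_subtype_subtypePerm {p : α → Prop} [DecidablePred p] {σ : Perm α}
    (h : ∀ a, p (σ a) ↔ p a) {s : Finset α} (hs : s.image σ = s) :
    (s.subtype p).image (σ.subtypePerm h) = s.subtype p := by
  apply map_injective (Function.Embedding.subtype p)
  have hcomm (a : {a // p a}) : Function.Embedding.subtype p (σ.subtypePerm h a) =
      σ (Function.Embedding.subtype p a) := rfl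
  rw [map_eq_image, map_eq_image, image_comm hcomm, ← map_eq_image, subtype_map]
  conv_rhs => rw [← hs, filter_image]
  simp only [h]

theorem fixesNoSmallSet_iff_subtypePerm {p : α → Prop} [DecidablePred p] {σ : Perm α}
    (h : ∀ a, p (σ a) ↔ p a) :
    FixesNoSmallSet t σ ↔ FixesNoSmallSet t (σ.subtypePerm h) ∧
      FixesNoSmallSet t (σ.subtypePerm (p := (¬p ·)) fun a => (h a).not) := by
  refine ⟨fun hσ => ⟨hσ.of_semiconj (e := .subtype _) fun _ => rfl,
    hσ.of_semiconj (e := .subtype _) fun _ => rfl⟩, fun ⟨hp, hnp⟩ s h1 h2 hs => ?_⟩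
  obtain ⟨a, ha⟩ := card_pos.1 h1
  have card_le (q : α → Prop) [DecidablePred q] : #(s.subtype q) ≤ t :=
    (card_subtype q s ▸ card_filter_le s q).trans h2
  by_cases hpa : p a
  · exact hp _ (card_pos.2 ⟨⟨a, hpa⟩, mem_subtype.2 ha⟩) (card_le p)
      (image_subtype_subtypePerm h hs)
  · exact hnp _ (card_pos.2 ⟨⟨a, hpa⟩, mem_subtype.2 ha⟩) (card_le _)
      (image_subtype_subtypePerm _ hs)

def subtypePermEquivProd (p : α → Prop) [DecidablePred p] :
    {σ : Perm α // ∀ a, p (σ a) ↔ p a} ≃ Perm {a // p a} × Perm {a // ¬p a} where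
  toFun σ := (σ.1.subtypePerm σ.2, σ.1.subtypePerm fun a => (σ.2 a).not)
  invFun τ := ⟨τ.1.subtypeCongr τ.2, fun a => by
    by_cases h : p a
    · rw [subtypeCongr.left_apply _ _ h]
      exact iff_of_true (τ.1 ⟨a, h⟩).2 h
    · rw [subtypeCongr.right_apply _ _ h]
      exact iff_of_false (τ.2 ⟨a, h⟩).2 h⟩
  left_inv σ := by
    ext a
    by_cases h : p a
    · simp [subtypeCongr.left_apply _ _ h]
    · simp [subtypeCongr.right_apply _ _ h]
  right_inv τ := by
    ext a
    · simp [subtypeCongr.left_apply_subtype]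
    · simp [subtypeCongr.right_apply_subtype]

theorem card_fixesNoSmallSet_and_image_eq [Fintype α] (t : ℕ) (s : Finset α) :
    Nat.card {σ : Perm α // FixesNoSmallSet t σ ∧ s.image σ = s} =
      Nat.card {σ : Perm (Fin #s) // FixesNoSmallSet t σ} *
        Nat.card {σ : Perm (Fin (Fintype.card α - #s)) // FixesNoSmallSet t σ} := by
  let e := calc
    {σ : Perm α // FixesNoSmallSet t σ ∧ s.image σ = s}
      ≃ {σ : Perm α // (∀ a, σ a ∈ s ↔ a ∈ s) ∧ FixesNoSmallSet t σ} :=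
        subtypeEquivRight fun σ => by rw [image_eq_iff_forall_mem_iff, and_comm]
    _ ≃ {τ : {σ : Perm α // ∀ a, σ a ∈ s ↔ a ∈ s} // FixesNoSmallSet t τ.1} :=
        (subtypeSubtypeEquivSubtypeInter _ _).symm
    _ ≃ {τ : Perm {a // a ∈ s} × Perm {a // a ∉ s} //
          FixesNoSmallSet t τ.1 ∧ FixesNoSmallSet t τ.2} :=
        (subtypePermEquivProd _).subtypeEquiv fun τ => fixesNoSmallSet_iff_subtypePerm τ.2
    _ ≃ {σ : Perm {a // a ∈ s} // FixesNoSmallSet t σ} ×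
          {σ : Perm {a // a ∉ s} // FixesNoSmallSet t σ} :=
        subtypeProdEquivProd
  have card_compl : Fintype.card {a // a ∉ s} = Fintype.card α - #s := by
    rw [Fintype.card_subtype_compl, Fintype.card_coe]
  rw [Nat.card_congr e, Nat.card_prod, card_fixesNoSmallSet_congr s.equivFin,
    card_fixesNoSmallSet_congr (Fintype.equivFinOfCardEq card_compl)]

theorem sum_card_fixedFinsets [Fintype α] (t k : ℕ) :
    ∑ σ : {σ : Perm α // FixesNoSmallSet t σ},
      Nat.card {s : Finset α // #s = k ∧ s.image σ = s} =
    (Fintype.card α).choose k * (Nat.card {σ : Perm (Fin k) // FixesNoSmallSet t σ} *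
      Nat.card {σ : Perm (Fin (Fintype.card α - k)) // FixesNoSmallSet t σ}) := by
  let r (σ : {σ : Perm α // FixesNoSmallSet t σ}) (s : Finset α) : Prop := s.image σ = s
  have fixed_sets (σ) :
      Nat.card {s : Finset α // #s = k ∧ s.image σ.1 = s} =
        #((powersetCard k univ).bipartiteAbove r σ) := by
    rw [Nat.card_eq_fintype_card, Fintype.card_subtype, bipartiteAbove, powersetCard_eq_filter,
      powerset_univ, filter_filter]
  have stabilizer {s : Finset α} (hs : s ∈ powersetCard k univ) :
      #(univ.bipartiteBelow r s) = Nat.card {σ : Perm (Fin k) // FixesNoSmallSet t σ} *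
        Nat.card {σ : Perm (Fin (Fintype.card α - k)) // FixesNoSmallSet t σ} := by
    rw [← (mem_powersetCard_univ.1 hs), ← card_fixesNoSmallSet_and_image_eq, bipartiteBelow,
      ← Fintype.card_subtype, ← Nat.card_eq_fintype_card]
    exact Nat.card_congr (subtypeSubtypeEquivSubtypeInter (FixesNoSmallSet t) (s.image · = s))
  rw [sum_congr rfl fun σ _ => fixed_sets σ, sum_card_bipartiteAbove_eq_sum_card_bipartiteBelow,
    sum_congr rfl fun _ => stabilizer, sum_const, card_powersetCard, card_univ, smul_eq_mul]

theorem permProp_eq (n t : ℕ) :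
    permProp n t = Nat.card {σ : Perm (Fin n) // FixesNoSmallSet t σ} / n.factorial :=
  rfl

theorem permProp_mul_permProp_mul_factorial {n k : ℕ} (hkn : k ≤ n) (t : ℕ) :
    permProp k t * permProp (n - k) t * n.factorial =
      (n.choose k * (Nat.card {σ : Perm (Fin k) // FixesNoSmallSet t σ} *
        Nat.card {σ : Perm (Fin (n - k)) // FixesNoSmallSet t σ}) : ℕ) := by
  rw [← Nat.choose_mul_factorial_mul_factorial hkn, permProp_eq, permProp_eq]
  push_cast
  field_simp

end Equiv.Perm

open Equiv.Perm

theorem stmt16_general (n k t : ℕ) (hk : 2 * k < n) :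
    (1 / (Nat.card {σ : Equiv.Perm (Fin n) //
        ∀ s : Finset (Fin n), 1 ≤ s.card → s.card ≤ t → s.image σ ≠ s} : ℝ)) *
      ∑ σ : {σ : Equiv.Perm (Fin n) //
          ∀ s : Finset (Fin n), 1 ≤ s.card → s.card ≤ t → s.image σ ≠ s},
        (Nat.card {s : Finset (Fin n) // s.card = k ∧ s.image (σ : Equiv.Perm (Fin n)) = s} : ℝ) =
      permProp k t * permProp (n - k) t * (Nat.factorial n : ℝ) /
        (Nat.card {σ : Equiv.Perm (Fin n) //
          ∀ s : Finset (Fin n), 1 ≤ s.card → s.card ≤ t → s.image σ ≠ s} : ℝ) := by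
  have hcount := sum_card_fixedFinsets (α := Fin n) t k
  rw [Fintype.card_fin] at hcount
  rw [one_div_mul_eq_div, permProp_mul_permProp_mul_factorial (by omega), ← hcount, Nat.cast_sum]
  rfl

/-- Let `1 ≤ t ≤ k < n/2`, let `A` be the set of permutations in `Sₙ` fixing no nonempty
subset of size at most `t`, and let `Ω` be the set of `k`-subsets of `{1, …, n}`. Then
the expected number of fixed points on `Ω` of a uniformly random element of `A` equals
`a_k(t) · a_{n-k}(t) · n! / |A|`. -/
theorem stmt16 (n k t : ℕ) (ht : 1 ≤ t) (htk : t ≤ k) (hk : 2 * k < n) :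
    (1 / (Nat.card {σ : Equiv.Perm (Fin n) //
        ∀ s : Finset (Fin n), 1 ≤ s.card → s.card ≤ t → s.image σ ≠ s} : ℝ)) *
      ∑ σ : {σ : Equiv.Perm (Fin n) //
          ∀ s : Finset (Fin n), 1 ≤ s.card → s.card ≤ t → s.image σ ≠ s},
        (Nat.card {s : Finset (Fin n) // s.card = k ∧ s.image (σ : Equiv.Perm (Fin n)) = s} : ℝ) =
      permProp k t * permProp (n - k) t * (Nat.factorial n : ℝ) /
        (Nat.card {σ : Equiv.Perm (Fin n) //
          ∀ s : Finset (Fin n), 1 ≤ s.card → s.card ≤ t → s.image σ ≠ s} : ℝ) :=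
  stmt16_general n k t hk
end
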